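/- arXiv:2201.12298 — 3 statements merged into one kernel-verified Lean document; each statement's English description precedes it below -/
import Mathlib

section
/- Let X be a non-negative random variable with finite positive mean, and let X* be its excess (integrated-tail) random variable, independent of X. Then the Gini coefficient of X equals P(X* ≥ X), i.e., E[|X₁ − X₂|]/(2E[X]) = P(X* ≥ X), where X₁, X₂ are independent copies of X. -/
/-!
Writing `|a - b| = (a - b)⁺ + (b - a)⁺` and using the symmetry of `μ ⊗ μ`, one gets
`E|X₁ - X₂| = 2 E[(X₂ - X₁)⁺]`. By the layer cake formula `E[(X - x)⁺] = ∫_x^∞ P(X > s) ds`,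
which for `x ≥ 0` is `E[X] P(X* ≥ x)`; integrating in `x` against the law of `X` gives
`E|X₁ - X₂| = 2 E[X] P(X* ≥ X)`.
-/

open MeasureTheory ProbabilityTheory Real Set

/-- The Gini coefficient of a distribution `μ` on `ℝ`:
`E[|X₁ - X₂|] / (2 E[X])` for `X₁, X₂` i.i.d. with law `μ`. -/
noncomputable def gini (μ : Measure ℝ) : ℝ :=
  (∫ p : ℝ × ℝ, |p.1 - p.2| ∂(μ.prod μ)) / (2 * ∫ x, x ∂μ)

theorem integral_Ioi_comp_add_right {E : Type*} [NormedAddCommGroup E] [NormedSpace ℝ E]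
    (f : ℝ → E) (a d : ℝ) : ∫ t in Ioi a, f (t + d) = ∫ t in Ioi (a + d), f t := by
  have h := (measurePreserving_add_right volume d).setIntegral_preimage_emb
    (MeasurableEquiv.addRight d).measurableEmbedding f (Ioi (a + d))
  rwa [preimage_add_const_Ioi, add_sub_cancel_right] at h

theorem integral_max_sub_zero_eq_integral_Ioi_measureReal_Ioi {μ : Measure ℝ}
    [IsFiniteMeasure μ] (hint : Integrable (fun y => y) μ) (x : ℝ) :
    ∫ y, max (y - x) 0 ∂μ = ∫ s in Ioi x, μ.real (Ioi s) := by
  have hlevel : ∀ t ∈ Ioi (0 : ℝ), {y | t < max (y - x) 0} = Ioi (t + x) :=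
    fun t (ht : 0 < t) => by
      ext y
      simp only [mem_ofPred_eq, mem_Ioi, lt_max_iff, or_iff_left (not_lt_of_gt ht),
        lt_sub_iff_add_lt]
  calc ∫ y, max (y - x) 0 ∂μ
      = ∫ t in Ioi 0, μ.real {y | t < max (y - x) 0} :=
        (hint.sub (integrable_const x)).pos_part.integral_eq_integral_meas_lt
          (ae_of_all _ fun y => le_max_right _ _)
    _ = ∫ t in Ioi 0, μ.real (Ioi (t + x)) :=
        setIntegral_congr_fun measurableSet_Ioi fun t ht => by rw [hlevel t ht]
    _ = ∫ s in Ioi x, μ.real (Ioi s) := by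
        rw [integral_Ioi_comp_add_right (fun s => μ.real (Ioi s)), zero_add]

theorem abs_sub_eq_max_sub_zero_add_max_sub_zero {α : Type*} [AddCommGroup α] [LinearOrder α]
    [IsOrderedAddMonoid α] (a b : α) :
    |a - b| = max (a - b) 0 + max (b - a) 0 := by
  rw [← posPart_add_negPart, ← posPart_neg, neg_sub]
  rfl

theorem integral_abs_fst_sub_snd_prod_self {μ : Measure ℝ} [IsFiniteMeasure μ]
    (hint : Integrable (fun y => y) μ) :
    ∫ p, |p.1 - p.2| ∂μ.prod μ = 2 * ∫ x, ∫ y, max (y - x) 0 ∂μ ∂μ := by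
  have hup : Integrable (fun p : ℝ × ℝ => max (p.2 - p.1) 0) (μ.prod μ) :=
    ((hint.comp_snd μ).sub (hint.comp_fst μ)).pos_part
  calc ∫ p, |p.1 - p.2| ∂μ.prod μ
      = ∫ p, max (p.1 - p.2) 0 ∂μ.prod μ + ∫ p, max (p.2 - p.1) 0 ∂μ.prod μ := by
        simp_rw [abs_sub_eq_max_sub_zero_add_max_sub_zero]
        exact integral_add hup.swap hup
    _ = 2 * ∫ p, max (p.2 - p.1) 0 ∂μ.prod μ := by
        rw [two_mul]
        congr 1
        exact integral_prod_swap (fun p : ℝ × ℝ => max (p.2 - p.1) 0)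
    _ = 2 * ∫ x, ∫ y, max (y - x) 0 ∂μ ∂μ := by rw [integral_prod _ hup]

theorem measureReal_prod_setOf_fst_le_snd (μ ν : Measure ℝ) [IsFiniteMeasure ν] :
    (μ.prod ν).real {p | p.1 ≤ p.2} = ∫ x, ν.real (Ici x) ∂μ := by
  have hIci : Measurable fun x : ℝ => ν (Ici x) :=
    Antitone.measurable fun _ _ hab => measure_mono (Ici_subset_Ici.mpr hab)
  rw [measureReal_def, Measure.prod_apply (measurableSet_le measurable_fst measurable_snd)]
  exact (integral_toReal hIci.aemeasurable (ae_of_all _ fun x => measure_lt_top ν _)).symm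

/-- `ν` is the law of the excess variable `X*`; independence of `X` and `X*` is encoded by the
product measure `μ.prod ν`. -/
theorem gini_eq_prob_excess_ge_general
    (μ ν : Measure ℝ) [IsProbabilityMeasure μ] [IsProbabilityMeasure ν]
    (hpos : ∀ᵐ x ∂μ, 0 ≤ x)
    (hint : Integrable (fun x => x) μ)
    (hν : ∀ x : ℝ, 0 ≤ x →
      (ν (Ici x)).toReal = (∫ x, x ∂μ)⁻¹ * ∫ s in Ioi x, (μ (Ioi s)).toReal) :
    gini μ = ((μ.prod ν) {p : ℝ × ℝ | p.1 ≤ p.2}).toReal := by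
  have hexcess : (fun x => ν.real (Ici x))
      =ᵐ[μ] fun x => (∫ x, x ∂μ)⁻¹ * ∫ y, max (y - x) 0 ∂μ := by
    filter_upwards [hpos] with x hx
    rw [integral_max_sub_zero_eq_integral_Ioi_measureReal_Ioi hint]
    exact hν x hx
  rw [gini, integral_abs_fst_sub_snd_prod_self hint, ← measureReal_def,
    measureReal_prod_setOf_fst_le_snd, integral_congr_ae hexcess, integral_const_mul,
    mul_div_mul_left _ _ two_ne_zero, div_eq_inv_mul]

/-- If `X ≥ 0` has law `μ` with finite positive mean, and `ν` is the law of the excess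
random variable `X*`, i.e. `P(X* ≥ x) = (1/E[X]) ∫_x^∞ P(X > s) ds`, then taking `X` and `X*`
independent (product measure), `G(X) = P(X* ≥ X)`. -/
theorem gini_eq_prob_excess_ge
    (μ ν : Measure ℝ) [IsProbabilityMeasure μ] [IsProbabilityMeasure ν]
    (hpos : ∀ᵐ x ∂μ, 0 ≤ x)
    (hint : Integrable (fun x => x) μ)
    (hmean : 0 < ∫ x, x ∂μ)
    (hν : ∀ x : ℝ, 0 ≤ x →
      (ν (Ici x)).toReal = (∫ x, x ∂μ)⁻¹ * ∫ s in Ioi x, (μ (Ioi s)).toReal) :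
    gini μ = ((μ.prod ν) {p : ℝ × ℝ | p.1 ≤ p.2}).toReal :=
  gini_eq_prob_excess_ge_general μ ν hpos hint hν
end

section
/- Let X be a random variable taking values in the non-negative integers with finite positive mean, and let X*_d be its discrete excess random variable, independent of X. Then the Gini coefficient of X satisfies G(X) = P(X*_d ≥ X) = Σ_{j=0}^∞ P(X = j) · P(X*_d ≥ j). -/
open MeasureTheory ProbabilityTheory Real Set
open scoped ENNReal

/-! Writing `|a - b|` as the number of `k` with `min a b ≤ k < max a b` and integrating
(Tonelli in `ℝ≥0∞`) gives `E|X₁ - X₂| = 2 ∑ₖ P(X > k) P(X ≤ k)`. Summing over the value of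
`X*_d` instead, `P(X ≤ X*_d) = ∑ₖ P(X*_d = k) P(X ≤ k) = ∑ₖ P(X > k) P(X ≤ k) / E[X]`, so both
sides of the first identity equal `∑ₖ P(X > k) P(X ≤ k) / E[X]`. The second identity sums
over the value of `X`. -/

lemma ENNReal.tsum_indicator_one_Ico (a b : ℕ) :
    ∑' k, (Ico a b).indicator (1 : ℕ → ℝ≥0∞) k = (b - a : ℕ) := by
  rw [← tsum_subtype]
  simp only [Pi.one_apply]
  rw [ENNReal.tsum_set_one, ← Finset.coe_Ico, encard_coe_eq_coe_finsetCard, Nat.card_Ico]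
  rfl

lemma ENNReal.ofReal_abs_natCast_sub_eq_tsum_indicator (a b : ℕ) :
    ENNReal.ofReal |(a : ℝ) - b| = ∑' k,
      ((Ioi k ×ˢ Iic k).indicator 1 (a, b) + (Iic k ×ˢ Ioi k).indicator 1 (a, b)) := by
  have hIco : ∀ a b k : ℕ, (Ioi k ×ˢ Iic k).indicator (1 : ℕ × ℕ → ℝ≥0∞) (a, b) =
      (Ico b a).indicator 1 k := by
    intro a b k
    simp only [indicator, mem_prod, mem_Ioi, mem_Iic, mem_Ico, and_comm, Pi.one_apply]
  have hswap : ∀ k : ℕ, (Iic k ×ˢ Ioi k).indicator (1 : ℕ × ℕ → ℝ≥0∞) (a, b) =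
      (Ioi k ×ˢ Iic k).indicator 1 (b, a) := by
    intro k
    simp only [indicator, mem_prod, and_comm, Pi.one_apply]
  simp_rw [hswap, hIco]
  rw [ENNReal.tsum_add, ENNReal.tsum_indicator_one_Ico, ENNReal.tsum_indicator_one_Ico]
  rcases le_total a b with h | h
  · rw [abs_sub_comm, abs_of_nonneg (sub_nonneg.2 (by exact_mod_cast h)), ← Nat.cast_sub h,
      Nat.sub_eq_zero_of_le h]
    simp
  · rw [abs_of_nonneg (sub_nonneg.2 (by exact_mod_cast h)), ← Nat.cast_sub h,
      Nat.sub_eq_zero_of_le h]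
    simp

lemma lintegral_ofReal_abs_natCast_sub_prod (μ ν : Measure ℕ) [SFinite ν] :
    ∫⁻ p, ENNReal.ofReal |(p.1 : ℝ) - p.2| ∂(μ.prod ν) =
      ∑' k, (μ (Ioi k) * ν (Iic k) + μ (Iic k) * ν (Ioi k)) := by
  simp_rw [ENNReal.ofReal_abs_natCast_sub_eq_tsum_indicator, Prod.mk.eta]
  rw [lintegral_tsum fun _ => measurable_of_countable _ |>.aemeasurable]
  refine tsum_congr fun k => ?_
  rw [lintegral_add_left (measurable_of_countable _),
    lintegral_indicator_one (.of_discrete), lintegral_indicator_one (.of_discrete),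
    Measure.prod_prod, Measure.prod_prod]

lemma integral_abs_sub_map_natCast_prod (μ ν : Measure ℕ) [SFinite μ] [SFinite ν] :
    ∫ p : ℝ × ℝ, |p.1 - p.2| ∂((μ.map (↑)).prod (ν.map (↑))) =
      (∫⁻ p, ENNReal.ofReal |(p.1 : ℝ) - p.2| ∂(μ.prod ν)).toReal := by
  have hcast : Measurable (fun n : ℕ => (n : ℝ)) := measurable_from_top
  rw [Measure.map_prod_map μ ν hcast hcast,
    integral_map (f := fun p : ℝ × ℝ => |p.1 - p.2|) (hcast.prodMap hcast).aemeasurable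
      (by fun_prop : Continuous fun p : ℝ × ℝ => |p.1 - p.2|).aestronglyMeasurable,
    integral_eq_lintegral_of_nonneg_ae (.of_forall fun _ => abs_nonneg _)
      (measurable_of_countable _).aestronglyMeasurable]
  rfl

namespace MeasureTheory.Measure

lemma prod_setOf_le_eq_tsum_mul_Ici (μ ν : Measure ℕ) [SFinite ν] :
    (μ.prod ν) {p | p.1 ≤ p.2} = ∑' j, μ {j} * ν (Ici j) := by
  rw [prod_apply .of_discrete, lintegral_countable']
  exact tsum_congr fun j => mul_comm _ _

lemma prod_setOf_le_eq_tsum_Iic_mul (μ ν : Measure ℕ) [SFinite μ] [SFinite ν] :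
    (μ.prod ν) {p | p.1 ≤ p.2} = ∑' k, μ (Iic k) * ν {k} := by
  rw [prod_apply_symm .of_discrete, lintegral_countable']
  rfl

end MeasureTheory.Measure

theorem gini_eq_prob_discreteExcess_ge_general
    (μ : Measure ℕ) [IsProbabilityMeasure μ]
    (νd : Measure ℕ) [IsProbabilityMeasure νd]
    (hmean : 0 < ∫ n, (n : ℝ) ∂μ)
    (hνd : ∀ x : ℕ, (νd {x}).toReal = (μ (Ioi x)).toReal / ∫ n, (n : ℝ) ∂μ) :
    gini (μ.map (fun n : ℕ => (n : ℝ))) = ((μ.prod νd) {p : ℕ × ℕ | p.1 ≤ p.2}).toReal ∧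
    ((μ.prod νd) {p : ℕ × ℕ | p.1 ≤ p.2}).toReal =
      ∑' j : ℕ, (μ {j}).toReal * (νd (Ici j)).toReal := by
  set m := ∫ n, (n : ℝ) ∂μ
  set S := ∑' k, μ (Ioi k) * μ (Iic k)
  have hνd_eq : ∀ x, νd {x} = μ (Ioi x) / ENNReal.ofReal m := fun x => by
    rw [← ENNReal.toReal_eq_toReal_iff' (measure_ne_top _ _)
      (ENNReal.div_ne_top (measure_ne_top _ _) (ENNReal.ofReal_pos.2 hmean).ne'),
      hνd, ENNReal.toReal_div, ENNReal.toReal_ofReal hmean.le]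
  have hprob : (μ.prod νd) {p | p.1 ≤ p.2} = S / ENNReal.ofReal m := by
    rw [Measure.prod_setOf_le_eq_tsum_Iic_mul, div_eq_mul_inv, ← ENNReal.tsum_mul_right]
    exact tsum_congr fun k => by rw [hνd_eq, div_eq_mul_inv, ← mul_assoc, mul_comm (μ (Iic k))]
  have hnum : ∫ p : ℝ × ℝ, |p.1 - p.2| ∂((μ.map (↑)).prod (μ.map (↑))) = 2 * S.toReal := by
    rw [integral_abs_sub_map_natCast_prod, lintegral_ofReal_abs_natCast_sub_prod, ENNReal.tsum_add]
    simp_rw [mul_comm (μ (Iic _))]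
    rw [← two_mul, ENNReal.toReal_mul, ENNReal.toReal_ofNat]
  have hden : ∫ x, x ∂(μ.map (fun n : ℕ => (n : ℝ))) = m :=
    integral_map measurable_from_top.aemeasurable aestronglyMeasurable_id
  refine ⟨?_, ?_⟩
  · rw [gini, hnum, hden, hprob, ENNReal.toReal_div, ENNReal.toReal_ofReal hmean.le,
      mul_div_mul_left _ _ two_ne_zero]
  · rw [Measure.prod_setOf_le_eq_tsum_mul_Ici,
      ENNReal.tsum_toReal_eq fun _ => ENNReal.mul_ne_top (measure_ne_top _ _) (measure_ne_top _ _)]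
    exact tsum_congr fun _ => ENNReal.toReal_mul

/-- For an `ℕ`-valued `X` with law `μ` and finite positive mean, with `X*_d` its discrete
excess variable (law `νd`, `P(X*_d = x) = P(X > x)/E[X]`) independent of `X`:
`G(X) = P(X*_d ≥ X) = Σ_j P(X = j) P(X*_d ≥ j)`. -/
theorem gini_eq_prob_discreteExcess_ge
    (μ : Measure ℕ) [IsProbabilityMeasure μ]
    (νd : Measure ℕ) [IsProbabilityMeasure νd]
    (hint : Integrable (fun n : ℕ => (n : ℝ)) μ)
    (hmean : 0 < ∫ n, (n : ℝ) ∂μ)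
    (hνd : ∀ x : ℕ, (νd {x}).toReal = (μ (Ioi x)).toReal / ∫ n, (n : ℝ) ∂μ) :
    gini (μ.map (fun n : ℕ => (n : ℝ))) = ((μ.prod νd) {p : ℕ × ℕ | p.1 ≤ p.2}).toReal ∧
    ((μ.prod νd) {p : ℕ × ℕ | p.1 ≤ p.2}).toReal =
      ∑' j : ℕ, (μ {j}).toReal * (νd (Ici j)).toReal :=
  gini_eq_prob_discreteExcess_ge_general μ νd hmean hνd
end

section
/- Let X_k ~ Poisson(Gamma(k, λ)) with λ > 0 fixed, and let X*_{k,d} denote its discrete excess random variable. Then for each fixed j ≥ 1, as k → 0, P(X*_{k,d} ≥ j) converges to d*_j = (1/(λ+1))^j − j·λ·Σ_{n=j}^∞ (1/(λ+1))^{n+1}/(n+1). -/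
open MeasureTheory ProbabilityTheory Real Set Filter
open scoped Topology

/-!
With `q = 1/(λ+1)`, the excess law gives `P(X*_{k,d} ≥ j) = 1 - λ ∑_{x<j} P(X_k > x)/k`.
As `k → 0`, `k Γ(k) → 1` makes `P(X_k = m)/k → qᵐ/m` for `m ≥ 1`, while
`1 - P(X_k = 0) = 1 - (1-q)ᵏ ~ -k log(1-q) = k ∑_{m≥1} qᵐ/m`; hence `P(X_k > x)/k` tends to
the tail `T_x = ∑_{m>x} qᵐ/m` of the logarithmic series. Since `T_x = q^{x+1}/(x+1) + T_{x+1}`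
and `q(λ+1) = 1`, the sum `1 - λ ∑_{x<j} T_x` telescopes to `qʲ - jλ T_j`.
-/

theorem toReal_measure_Ici_eq_one_sub_sum (ν : Measure ℕ) [IsProbabilityMeasure ν] (j : ℕ) :
    (ν (Ici j)).toReal = 1 - ∑ x ∈ Finset.range j, (ν {x}).toReal := by
  rw [← Set.compl_Iio, ← measureReal_def, probReal_compl_eq_one_sub measurableSet_Iio,
    ← Finset.coe_range, ← sum_measureReal_singleton]
  rfl

theorem tendsto_one_sub_rpow_div {a : ℝ} (ha : 0 < a) :
    Tendsto (fun k : ℝ => (1 - a ^ k) / k) (𝓝[≠] 0) (𝓝 (-log a)) := by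
  have hslope := (hasStrictDerivAt_const_rpow ha 0).hasDerivAt.tendsto_slope_zero
  simp only [zero_add, rpow_zero, one_mul, smul_eq_mul] at hslope
  refine hslope.neg.congr fun k => ?_
  rw [inv_mul_eq_div, ← neg_div, neg_sub]

theorem tendsto_Gamma_add_div_mul_Gamma {s : ℝ} (hs : 0 < s) :
    Tendsto (fun k : ℝ => Gamma (k + s) / (k * Gamma k)) (𝓝[>] 0) (𝓝 (Gamma s)) := by
  have hcont : ∀ t : ℝ, 0 < t → Tendsto (fun k : ℝ => Gamma (k + t)) (𝓝 0) (𝓝 (Gamma t)) := by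
    intro t ht
    have hΓ := (differentiableOn_Gamma_Ioi.differentiableAt (Ioi_mem_nhds ht)).continuousAt
    exact hΓ.tendsto.comp ((continuous_add_const t).tendsto' 0 t (zero_add t))
  have hlim := (hcont s hs).div (hcont 1 one_pos) (by simp)
  rw [Gamma_one, div_one] at hlim
  refine (hlim.mono_left nhdsWithin_le_nhds).congr' ?_
  filter_upwards [self_mem_nhdsWithin] with k hk
  rw [Pi.div_apply, Gamma_add_one (ne_of_gt hk)]

/-- The law of `Poisson(Gamma(k, λ))` with `q = 1/(λ+1)`, so that `1 - q = λ/(λ+1)`. -/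
noncomputable def negBinomialPMF (q k : ℝ) (m : ℕ) : ℝ :=
  Gamma (k + m) / (m.factorial * Gamma k) * (1 - q) ^ k * q ^ m

theorem negBinomialPMF_zero (q : ℝ) {k : ℝ} (hk : 0 < k) :
    negBinomialPMF q k 0 = (1 - q) ^ k := by
  simp [negBinomialPMF, (Gamma_pos_of_pos hk).ne']

theorem tendsto_negBinomialPMF_succ_div {q : ℝ} (hq : q < 1) (m : ℕ) :
    Tendsto (fun k : ℝ => negBinomialPMF q k (m + 1) / k) (𝓝[>] 0)
      (𝓝 (q ^ (m + 1) / (m + 1))) := by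
  have hpow : Tendsto (fun k : ℝ => (1 - q) ^ k) (𝓝[>] 0) (𝓝 1) := by
    simpa using ((continuous_const_rpow (sub_pos.2 hq).ne').tendsto 0).mono_left nhdsWithin_le_nhds
  have hlim := ((tendsto_Gamma_add_div_mul_Gamma (s := m + 1) (by positivity)).div_const
    ((m + 1).factorial : ℝ)).mul (hpow.mul_const (q ^ (m + 1)))
  have hval : Gamma (m + 1) / ((m + 1).factorial : ℝ) * (1 * q ^ (m + 1)) =
      q ^ (m + 1) / (m + 1) := by
    rw [Gamma_nat_eq_factorial, Nat.factorial_succ]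
    push_cast
    field_simp
  rw [hval] at hlim
  refine hlim.congr fun k => ?_
  simp only [negBinomialPMF]
  push_cast
  ring

theorem one_sub_mul_sum_eq_pow_sub_mul {l q : ℝ} (hlq : q * (l + 1) = 1) {T : ℕ → ℝ}
    (hT : ∀ x : ℕ, T x = q ^ (x + 1) / (x + 1) + T (x + 1)) (j : ℕ) :
    1 - l * ∑ x ∈ Finset.range j, T x = q ^ j - j * l * T j := by
  induction j with
  | zero => simp
  | succ n ih =>
    have hcancel : ((n : ℝ) + 1) * (q ^ (n + 1) / (n + 1)) = q ^ (n + 1) :=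
      mul_div_cancel₀ _ (by positivity)
    rw [Finset.sum_range_succ, mul_add, ← sub_sub, ih, hT n]
    push_cast
    linear_combination (-q ^ n) * hlq - l * hcancel

noncomputable def logTail (q : ℝ) (x : ℕ) : ℝ := ∑' n : ℕ, q ^ (x + n + 1) / (x + n + 1)

theorem logTail_eq {q : ℝ} (hq : |q| < 1) (x : ℕ) :
    logTail q x = -log (1 - q) - ∑ i ∈ Finset.range x, q ^ (i + 1) / (i + 1) := by
  have hsum := hasSum_pow_div_log_of_abs_lt_one hq
  rw [eq_sub_iff_add_eq', ← hsum.tsum_eq, ← hsum.summable.sum_add_tsum_nat_add x, logTail]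
  congr 2 with n
  rw [add_comm n x]
  push_cast
  ring

theorem logTail_eq_add {q : ℝ} (hq : |q| < 1) (x : ℕ) :
    logTail q x = q ^ (x + 1) / (x + 1) + logTail q (x + 1) := by
  rw [logTail_eq hq, logTail_eq hq, Finset.sum_range_succ]
  ring

theorem tendsto_toReal_measure_Ioi_div_logTail {q : ℝ} (hq : |q| < 1)
    (μ : ℝ → Measure ℕ) [∀ k, IsProbabilityMeasure (μ k)]
    (hμ : ∀ k : ℝ, 0 < k → ∀ m : ℕ, (μ k {m}).toReal = negBinomialPMF q k m) (x : ℕ) :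
    Tendsto (fun k : ℝ => (μ k (Ioi x)).toReal / k) (𝓝[>] 0) (𝓝 (logTail q x)) := by
  have hq1 : q < 1 := (abs_lt.1 hq).2
  have hlim := ((tendsto_one_sub_rpow_div (sub_pos.2 hq1)).mono_left
    (nhdsWithin_mono _ fun k hk => ne_of_gt hk)).sub
    (tendsto_finsetSum (Finset.range x) fun i _ => tendsto_negBinomialPMF_succ_div hq1 i)
  rw [← logTail_eq hq] at hlim
  refine hlim.congr' ?_
  filter_upwards [self_mem_nhdsWithin] with k hk
  rw [← Order.Ici_succ, Nat.succ_eq_succ, toReal_measure_Ici_eq_one_sub_sum,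
    Finset.sum_range_succ', hμ k hk 0, negBinomialPMF_zero q hk,
    Finset.sum_congr rfl fun i _ => hμ k hk (i + 1), ← Finset.sum_div]
  ring

theorem negBinomial_discreteExcess_asymptotic_general
    (l : ℝ) (hl : 0 < l)
    (μ : ℝ → Measure ℕ) [∀ k, IsProbabilityMeasure (μ k)]
    (hμ : ∀ k : ℝ, 0 < k → ∀ j : ℕ, ((μ k) {j}).toReal =
      Real.Gamma (k + j) / ((j.factorial : ℝ) * Real.Gamma k) *
        (l / (l + 1)) ^ k * (1 / (l + 1)) ^ j)
    (ν : ℝ → Measure ℕ) [∀ k, IsProbabilityMeasure (ν k)]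
    (hν : ∀ k : ℝ, 0 < k → ∀ x : ℕ, ((ν k) {x}).toReal = ((μ k) (Ioi x)).toReal / (k / l))
    (j : ℕ) :
    Tendsto (fun k : ℝ => ((ν k) (Ici j)).toReal) (nhdsWithin 0 (Ioi 0))
      (nhds ((1 / (l + 1)) ^ j -
        (j : ℝ) * l * ∑' n : ℕ, (1 / (l + 1)) ^ (j + n + 1) / (j + n + 1))) := by
  have hl1 : 0 < l + 1 := by linarith
  have h1q : l / (l + 1) = 1 - 1 / (l + 1) := by
    rw [eq_sub_iff_add_eq, ← add_div, div_self hl1.ne']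
  set q : ℝ := 1 / (l + 1)
  have hlq : q * (l + 1) = 1 := one_div_mul_cancel hl1.ne'
  have hq : |q| < 1 := by
    rw [abs_of_pos (by positivity), div_lt_one hl1]
    linarith
  have hμq : ∀ k : ℝ, 0 < k → ∀ m : ℕ, (μ k {m}).toReal = negBinomialPMF q k m := by
    intro k hk m
    rw [hμ k hk m, negBinomialPMF, h1q]
  have hexcess : ∀ k : ℝ, 0 < k →
      (ν k (Ici j)).toReal = 1 - l * ∑ x ∈ Finset.range j, (μ k (Ioi x)).toReal / k := by
    intro k hk
    rw [toReal_measure_Ici_eq_one_sub_sum, Finset.mul_sum]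
    congr 1
    refine Finset.sum_congr rfl fun x _ => ?_
    rw [hν k hk x]
    field_simp
  have hlim := tendsto_const_nhds (x := (1 : ℝ)).sub <| (tendsto_finsetSum (Finset.range j)
    fun x _ => tendsto_toReal_measure_Ioi_div_logTail hq μ hμq x).const_mul l
  rw [one_sub_mul_sum_eq_pow_sub_mul hlq (logTail_eq_add hq)] at hlim
  exact hlim.congr' (eventually_nhdsWithin_of_forall fun k hk => (hexcess k hk).symm)

/-- For the Poisson–Gamma (negative binomial) family `X_k ~ Poisson(Gamma(k, λ))` with
discrete excess variable `X*_{k,d}` (law `ν k`, `P(X*_{k,d} = x) = P(X_k > x)/(k/λ)`), and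
fixed `j ≥ 1`: as `k → 0⁺`, `P(X*_{k,d} ≥ j)` converges to
`d*_j = (1/(λ+1))^j - j λ Σ_{n=j}^∞ (1/(λ+1))^{n+1}/(n+1)`. -/
theorem negBinomial_discreteExcess_asymptotic
    (l : ℝ) (hl : 0 < l)
    (μ : ℝ → Measure ℕ) [∀ k, IsProbabilityMeasure (μ k)]
    (hμ : ∀ k : ℝ, 0 < k → ∀ j : ℕ, ((μ k) {j}).toReal =
      Real.Gamma (k + j) / ((j.factorial : ℝ) * Real.Gamma k) *
        (l / (l + 1)) ^ k * (1 / (l + 1)) ^ j)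
    (ν : ℝ → Measure ℕ) [∀ k, IsProbabilityMeasure (ν k)]
    (hν : ∀ k : ℝ, 0 < k → ∀ x : ℕ, ((ν k) {x}).toReal = ((μ k) (Ioi x)).toReal / (k / l))
    (j : ℕ) (hj : 1 ≤ j) :
    Tendsto (fun k : ℝ => ((ν k) (Ici j)).toReal) (nhdsWithin 0 (Ioi 0))
      (nhds ((1 / (l + 1)) ^ j -
        (j : ℝ) * l * ∑' n : ℕ, (1 / (l + 1)) ^ (j + n + 1) / (j + n + 1))) :=
  negBinomial_discreteExcess_asymptotic_general l hl μ hμ ν hν j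
end
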